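/- Let φ(s) = ∑_{n≥1} c_n n^{-s} be a nonconstant Dirichlet series converging uniformly on ℂ_ε for every ε > 0, such that Re φ(s) > 0 for all s ∈ ℂ₊. Then for every ε > 0 there exists θ > 0 such that φ(ℂ_ε) ⊆ ℂ_θ, i.e., Re φ(s) ≥ θ whenever Re s > ε. -/

import Mathlib

/-!
Suppose `Re φ` came arbitrarily close to `0` on `ℂ_ε`. The constant term satisfies `Re c₀ > 0`:
a vertical shift rotates the first nonvanishing coefficient `c_k` to the negative real axis, and
for large `Re s` the series is `c₀ + c_k (k+1)^{-s}` up to a smaller error. As `φ → c₀` when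
`Re s → ∞`, the near-zeros of `Re φ` therefore lie in a vertical strip. A vertical translate
`φ(· + i t)` is the Dirichlet series with coefficients twisted by `(n+1)^{-i t}`; by Tychonoff a
subsequence of the twists converges, and the translates then converge uniformly on `ℂ_{ε/2}` to a
holomorphic `g` with `Re g ≥ 0` whose real part vanishes at an interior point. By the minimum
principle `Re g ≡ 0`, which contradicts `g → c₀` as `Re s → ∞`.
-/

open Filter Complex Set Topology

lemma eventually_mul_rpow_sub_lt {x y q : ℝ} (K κ : ℝ) (hx : 0 < x) (hxy : x < y) (hq : 0 < q) :
    ∀ᶠ σ in atTop, K * y ^ (κ - σ) < q * x ^ (-σ) := by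
  have hy : 0 < y := hx.trans hxy
  have hratio : Tendsto (fun σ : ℝ => K * y ^ κ * (x / y) ^ σ) atTop (𝓝 0) := by
    simpa using (tendsto_rpow_atTop_of_base_lt_one _ (by linarith [div_pos hx hy])
      ((div_lt_one hy).mpr hxy)).const_mul (K * y ^ κ)
  filter_upwards [hratio.eventually (gt_mem_nhds hq)] with σ hσ
  have hxσ : 0 < x ^ (-σ) := Real.rpow_pos_of_pos hx _
  calc K * y ^ (κ - σ) = K * y ^ κ * (x / y) ^ σ * x ^ (-σ) := by
        rw [Real.div_rpow hx.le hy.le, Real.rpow_sub hy, Real.rpow_neg hx.le]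
        field_simp
    _ < q * x ^ (-σ) := by gcongr

lemma sum_Ico_inv_natCast_add_one_sq_le_two (N M : ℕ) :
    ∑ n ∈ Finset.Ico N M, (((n : ℝ) + 1) ^ 2)⁻¹ ≤ 2 := by
  calc ∑ n ∈ Finset.Ico N M, (((n : ℝ) + 1) ^ 2)⁻¹
      ≤ ∑ n ∈ Finset.range M, (((n : ℝ) + 1) ^ 2)⁻¹ :=
        Finset.sum_le_sum_of_subset_of_nonneg (fun n hn => by simp at hn ⊢; omega)
          fun _ _ _ => by positivity
    _ = ∑ i ∈ Finset.Ioo 0 (M + 1), ((i : ℝ) ^ 2)⁻¹ := by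
        rw [Finset.range_eq_Ico, ← Finset.Ico_add_one_left_eq_Ioo, ← Finset.sum_Ico_add']
        push_cast
        rfl
    _ ≤ 2 := by simpa using sum_Ioo_inv_sq_le (α := ℝ) 0 (M + 1)

lemma norm_natCast_add_one_cpow (n : ℕ) (s : ℂ) :
    ‖((n : ℂ) + 1) ^ s‖ = ((n : ℝ) + 1) ^ s.re := by
  rw [← norm_cpow_eq_rpow_re_of_pos (by positivity)]
  push_cast
  rfl

lemma exists_cpow_neg_mul_I_eq {x : ℝ} (hx : 0 < x) (hx1 : x ≠ 1) {z : ℂ} (hz : ‖z‖ = 1) :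
    ∃ t : ℝ, (x : ℂ) ^ (-(t * I)) = z := by
  refine ⟨-arg z / Real.log x, ?_⟩
  have hlog : Real.log x ≠ 0 := Real.log_ne_zero_of_pos_of_ne_one hx hx1
  rw [cpow_def_of_ne_zero (ofReal_ne_zero.mpr hx.ne'), ← ofReal_log hx.le]
  conv_rhs => rw [← norm_mul_exp_arg_mul_I z, hz]
  push_cast
  rw [one_mul]
  congr 1
  field_simp
  exact mul_div_cancel_left₀ _ (ofReal_ne_zero.mpr hlog)

-- Moore–Osgood: the inner limit is uniform in both variables, the outer one uniform on `s`.
theorem exists_tendstoUniformlyOn_of_tendstoUniformlyOn_prod {ι κ α β : Type*} [UniformSpace β]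
    [CompleteSpace β] {p : Filter ι} {l : Filter κ} [p.NeBot] [l.NeBot]
    {F : ι → κ → α → β} {f : κ → α → β} {L : ι → α → β} {s : Set α}
    (hF : TendstoUniformlyOn (fun i (q : κ × α) => F i q.1 q.2) (fun q => f q.1 q.2) p
      (univ ×ˢ s))
    (hL : ∀ i, TendstoUniformlyOn (F i) (L i) l s) :
    ∃ g, TendstoUniformlyOn L g p s ∧ TendstoUniformlyOn f g l s := by
  have hCauchy : UniformCauchySeqOn L p s := by
    intro V hV
    obtain ⟨W, hW, hWV⟩ := comp3_mem_uniformity hV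
    filter_upwards [hF.uniformCauchySeqOn W hW] with m hm x hx
    have h₁ : ∀ᶠ j in l, (L m.1 x, F m.1 j x) ∈ W :=
      Uniform.tendsto_nhds_right.mp ((hL m.1).tendsto_at hx) hW
    have h₂ : ∀ᶠ j in l, (F m.2 j x, L m.2 x) ∈ W :=
      Uniform.tendsto_nhds_left.mp ((hL m.2).tendsto_at hx) hW
    obtain ⟨j, hj₁, hj₂⟩ := (h₁.and h₂).exists
    exact hWV ⟨_, hj₁, _, hm (j, x) ⟨trivial, hx⟩, hj₂⟩
  obtain ⟨i₀⟩ := nonempty_of_neBot p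
  have hlim (x : α) : ∃ y, x ∈ s → Tendsto (fun i => L i x) p (𝓝 y) := by
    by_cases hx : x ∈ s
    · exact (cauchy_map_iff_exists_tendsto.mp (hCauchy.cauchy_map hx)).imp fun _ h _ => h
    · exact ⟨L i₀ x, fun h => absurd h hx⟩
  choose g hg using hlim
  have hLg := hCauchy.tendstoUniformlyOn_of_tendsto hg
  refine ⟨g, hLg, fun V hV => ?_⟩
  obtain ⟨W, hW, hWsymm, hWV⟩ := comp_comp_symm_mem_uniformity_sets hV
  obtain ⟨i, hi₁, hi₂⟩ := ((hLg W hW).and (hF W hW)).exists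
  filter_upwards [hL i W hW] with j hj x hx
  exact hWV ⟨_, ⟨_, hi₁ x hx, hj x hx⟩, hWsymm.symm _ _ (hi₂ (j, x) ⟨trivial, hx⟩)⟩

theorem eqOn_re_of_isPreconnected_of_isMinOn_re {E : Type*} [NormedAddCommGroup E]
    [NormedSpace ℂ E] {f : E → ℂ} {U : Set E} {c : E} (hU : IsPreconnected U) (ho : IsOpen U)
    (hd : DifferentiableOn ℂ f U) (hc : c ∈ U) (hmin : IsMinOn (fun x => (f x).re) U c) :
    EqOn (fun x => (f x).re) (fun _ => (f c).re) U := by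
  have hnorm (x : E) : ‖exp (-f x)‖ = Real.exp (-(f x).re) := by simp [norm_exp]
  have hmax : IsMaxOn (norm ∘ fun x => exp (-f x)) U c := fun x hx => by
    simpa [hnorm] using hmin hx
  intro x hx
  simpa [hnorm] using norm_eqOn_of_isPreconnected_of_isMaxOn hU ho hd.neg.cexp hc hmax hx

/-- The `n`-th coefficient multiplies `(n + 1) ^ (-s)`, so `a 0` is the constant term. -/
noncomputable def dirichletPartialSum (a : ℕ → ℂ) (N : ℕ) (s : ℂ) : ℂ :=
  ∑ n ∈ Finset.range N, a n * ((n : ℂ) + 1) ^ (-s)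

section DirichletPartialSum

variable {a : ℕ → ℂ} {B κ : ℝ}

@[simp]
lemma dirichletPartialSum_one (s : ℂ) : dirichletPartialSum a 1 s = a 0 := by
  simp [dirichletPartialSum]

lemma dirichletPartialSum_add_mul_I (N : ℕ) (s : ℂ) (t : ℝ) :
    dirichletPartialSum a N (s + t * I) =
      dirichletPartialSum (fun n => a n * ((n : ℂ) + 1) ^ (-(t * I))) N s := by
  refine Finset.sum_congr rfl fun n _ => ?_
  rw [neg_add, cpow_add _ _ (Nat.cast_add_one_ne_zero n)]
  ring

lemma differentiable_dirichletPartialSum (a : ℕ → ℂ) (N : ℕ) :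
    Differentiable ℂ (dirichletPartialSum a N) :=
  Differentiable.fun_sum fun n _ =>
    (differentiable_id.neg.const_cpow (Or.inl (Nat.cast_add_one_ne_zero n))).const_mul (a n)

lemma exists_norm_le_mul_rpow_of_tendsto {s w : ℂ}
    (h : Tendsto (fun N => dirichletPartialSum a N s) atTop (𝓝 w)) :
    ∃ B, ∀ n, ‖a n‖ ≤ B * ((n : ℝ) + 1) ^ s.re := by
  have hterm : Tendsto (fun n => a n * ((n : ℂ) + 1) ^ (-s)) atTop (𝓝 0) := by
    simpa [dirichletPartialSum, Finset.sum_range_succ] using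
      ((tendsto_add_atTop_iff_nat 1).mpr h).sub h
  obtain ⟨B, hB⟩ := hterm.norm.bddAbove_range
  refine ⟨B, fun n => ?_⟩
  have hn : ‖a n * ((n : ℂ) + 1) ^ (-s)‖ ≤ B := hB ⟨n, rfl⟩
  rwa [norm_mul, norm_natCast_add_one_cpow, neg_re, Real.rpow_neg (by positivity),
    ← div_eq_mul_inv, div_le_iff₀ (by positivity)] at hn

lemma norm_coeff_mul_cpow_neg_le (hB : ∀ n, ‖a n‖ ≤ B * ((n : ℝ) + 1) ^ κ) {s : ℂ}
    (hs : κ + 2 ≤ s.re) {N n : ℕ} (hn : N ≤ n) :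
    ‖a n * ((n : ℂ) + 1) ^ (-s)‖ ≤
      B * ((N : ℝ) + 1) ^ (κ + 2 - s.re) * (((n : ℝ) + 1) ^ 2)⁻¹ := by
  have hB0 : 0 ≤ B := by simpa using (norm_nonneg _).trans (hB 0)
  have hn' : (N : ℝ) + 1 ≤ (n : ℝ) + 1 := by exact_mod_cast Nat.succ_le_succ hn
  rw [norm_mul, norm_natCast_add_one_cpow, neg_re]
  calc ‖a n‖ * ((n : ℝ) + 1) ^ (-s.re)
      ≤ B * ((n : ℝ) + 1) ^ κ * ((n : ℝ) + 1) ^ (-s.re) := by gcongr; exact hB n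
    _ = B * ((n : ℝ) + 1) ^ (κ + 2 - s.re) * (((n : ℝ) + 1) ^ 2)⁻¹ := by
        rw [← Real.rpow_natCast, ← Real.rpow_neg (by positivity), mul_assoc, mul_assoc,
          ← Real.rpow_add (by positivity), ← Real.rpow_add (by positivity)]
        ring_nf
    _ ≤ B * ((N : ℝ) + 1) ^ (κ + 2 - s.re) * (((n : ℝ) + 1) ^ 2)⁻¹ := by
        have hpow :=
          Real.rpow_le_rpow_of_nonpos (by positivity) hn' (by linarith : κ + 2 - s.re ≤ 0)
        gcongr

lemma norm_sub_dirichletPartialSum_le (hB : ∀ n, ‖a n‖ ≤ B * ((n : ℝ) + 1) ^ κ) {s w : ℂ}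
    (hs : κ + 2 ≤ s.re) (hw : Tendsto (fun M => dirichletPartialSum a M s) atTop (𝓝 w)) (N : ℕ) :
    ‖w - dirichletPartialSum a N s‖ ≤ 2 * B * ((N : ℝ) + 1) ^ (κ + 2 - s.re) := by
  refine le_of_tendsto ((hw.sub_const _).norm) ?_
  filter_upwards [eventually_ge_atTop N] with M hM
  rw [dirichletPartialSum, dirichletPartialSum, ← Finset.sum_Ico_eq_sub _ hM]
  calc ‖∑ n ∈ Finset.Ico N M, a n * ((n : ℂ) + 1) ^ (-s)‖
      ≤ ∑ n ∈ Finset.Ico N M, B * ((N : ℝ) + 1) ^ (κ + 2 - s.re) * (((n : ℝ) + 1) ^ 2)⁻¹ :=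
        norm_sum_le_of_le _ fun n hn => norm_coeff_mul_cpow_neg_le hB hs (Finset.mem_Ico.mp hn).1
    _ ≤ B * ((N : ℝ) + 1) ^ (κ + 2 - s.re) * 2 := by
        rw [← Finset.mul_sum]
        have hB0 : 0 ≤ B := by simpa using (norm_nonneg _).trans (hB 0)
        gcongr
        exact sum_Ico_inv_natCast_add_one_sq_le_two N M
    _ = 2 * B * ((N : ℝ) + 1) ^ (κ + 2 - s.re) := by ring

lemma tendsto_comap_re_atTop_coeff_zero {f : ℂ → ℂ} {R : ℝ}
    (hB : ∀ n, ‖a n‖ ≤ B * ((n : ℝ) + 1) ^ κ)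
    (hf : ∀ s, R < s.re → Tendsto (fun N => dirichletPartialSum a N s) atTop (𝓝 (f s))) :
    Tendsto f (comap re atTop) (𝓝 (a 0)) := by
  refine Metric.tendsto_nhds.mpr fun δ hδ => ?_
  obtain ⟨σ₀, hσ₀⟩ := eventually_atTop.mp ((eventually_gt_atTop R).and
    ((eventually_ge_atTop (κ + 2)).and (eventually_mul_rpow_sub_lt (2 * B) (κ + 2) one_pos
      one_lt_two hδ)))
  refine (atTop_basis.comap re).eventually_iff.mpr ⟨σ₀, trivial, fun s hs => ?_⟩
  obtain ⟨hR, hκ, hsmall⟩ := hσ₀ s.re hs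
  have htail := norm_sub_dirichletPartialSum_le hB hκ (hf s hR) 1
  rw [dirichletPartialSum_one] at htail
  rw [dist_eq_norm]
  norm_num at htail hsmall
  linarith

lemma zero_lt_re_coeff_zero_of_coeff_eq_neg {f : ℂ → ℂ} {R r : ℝ} {k : ℕ}
    (hB : ∀ n, ‖a n‖ ≤ B * ((n : ℝ) + 1) ^ κ)
    (hf : ∀ s, R < s.re → Tendsto (fun N => dirichletPartialSum a N s) atTop (𝓝 (f s)))
    (hre : ∀ s, R < s.re → 0 ≤ (f s).re)
    (hk : 1 ≤ k) (hmid : ∀ n, 1 ≤ n → n < k → a n = 0) (hr : 0 < r) (hak : a k = -r) :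
    0 < (a 0).re := by
  obtain ⟨σ, hσR, hσκ, hσ⟩ := ((eventually_gt_atTop R).and ((eventually_ge_atTop (κ + 2)).and
    (eventually_mul_rpow_sub_lt (2 * B) (κ + 2) (x := (k : ℝ) + 1) (y := (k : ℝ) + 1 + 1)
      (by positivity) (by linarith) (half_pos hr)))).exists
  have hσ' : R < (σ : ℂ).re := by simpa using hσR
  have htail := norm_sub_dirichletPartialSum_le hB (by simpa using hσκ) (hf σ hσ') (k + 1)
  have hP : dirichletPartialSum a (k + 1) σ = a 0 - (r * ((k : ℝ) + 1) ^ (-σ) : ℝ) := by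
    rw [dirichletPartialSum, Finset.sum_range_succ,
      Finset.sum_eq_single_of_mem 0 (Finset.mem_range.mpr hk), hak]
    · push_cast
      rw [ofReal_cpow (by positivity)]
      simp [sub_eq_add_neg]
    · intro n hn hn0
      rw [hmid n (Nat.one_le_iff_ne_zero.mpr hn0) (Finset.mem_range.mp hn), zero_mul]
  have hre_le := re_le_norm (f σ - dirichletPartialSum a (k + 1) σ)
  rw [hP, sub_re, sub_re, ofReal_re] at hre_le
  simp only [hP, Nat.cast_add, Nat.cast_one, ofReal_re] at htail
  have hpow : 0 < ((k : ℝ) + 1) ^ (-σ) := by positivity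
  linarith [hre σ hσ', mul_pos hr hpow]

lemma zero_lt_re_coeff_zero {f : ℂ → ℂ} {R : ℝ}
    (hB : ∀ n, ‖a n‖ ≤ B * ((n : ℝ) + 1) ^ κ)
    (hf : ∀ s, R < s.re → Tendsto (fun N => dirichletPartialSum a N s) atTop (𝓝 (f s)))
    (hre : ∀ s, R < s.re → 0 ≤ (f s).re) (ha : ∃ n, 1 ≤ n ∧ a n ≠ 0) :
    0 < (a 0).re := by
  classical
  set k := Nat.find ha
  obtain ⟨hk, hak⟩ : 1 ≤ k ∧ a k ≠ 0 := Nat.find_spec ha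
  obtain ⟨t, ht⟩ := exists_cpow_neg_mul_I_eq (x := (k : ℝ) + 1) (by positivity)
    (by norm_cast; omega) (z := -(‖a k‖ / a k)) (by simp [hak])
  push_cast at ht
  have hmain := zero_lt_re_coeff_zero_of_coeff_eq_neg
    (a := fun n => a n * ((n : ℂ) + 1) ^ (-(t * I))) (f := fun s => f (s + t * I))
    (fun n => by simpa [norm_natCast_add_one_cpow] using hB n)
    (fun s hs => by simpa [dirichletPartialSum_add_mul_I] using hf (s + t * I) (by simpa using hs))
    (fun s hs => hre _ (by simpa using hs)) hk
    (fun n h1 h2 => by simp [not_not.mp (not_and.mp (Nat.find_min ha h2) h1)])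
    (norm_pos_iff.mpr hak) (by rw [ht]; field_simp)
  simpa using hmain

lemma tendstoUniformlyOn_dirichletPartialSum {ι : Type*} {l : Filter ι} {b : ι → ℕ → ℂ}
    (hb : ∀ n, Tendsto (fun j => b j n) l (𝓝 (a n))) (N : ℕ) (R : ℝ) :
    TendstoUniformlyOn (fun j => dirichletPartialSum (b j) N) (dirichletPartialSum a N) l
      {s | R < s.re} := by
  set C : ι → ℝ := fun j => ∑ n ∈ Finset.range N, ‖a n - b j n‖ * ((n : ℝ) + 1) ^ (-R)
  have hC : Tendsto C l (𝓝 0) := by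
    simpa using tendsto_finsetSum (Finset.range N) fun n _ =>
      (((tendsto_const_nhds (x := a n)).sub (hb n)).norm.mul_const (((n : ℝ) + 1) ^ (-R)))
  rw [Metric.tendstoUniformlyOn_iff]
  intro δ hδ
  filter_upwards [hC.eventually (gt_mem_nhds hδ)] with j hj s hs
  calc dist (dirichletPartialSum a N s) (dirichletPartialSum (b j) N s)
      = ‖∑ n ∈ Finset.range N, (a n - b j n) * ((n : ℂ) + 1) ^ (-s)‖ := by
        simp only [dirichletPartialSum, dist_eq_norm, ← Finset.sum_sub_distrib, sub_mul]
    _ ≤ C j := by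
        refine norm_sum_le_of_le _ fun n _ => ?_
        rw [norm_mul, norm_natCast_add_one_cpow, neg_re]
        have hs' : R < s.re := hs
        gcongr
        linarith [n.cast_nonneg (α := ℝ)]
    _ < δ := hj

lemma exists_tendstoUniformlyOn_vertical_translate {φ : ℂ → ℂ} {R : ℝ} {ι : Type*}
    {l : Filter ι} [l.NeBot] {t : ι → ℝ} {u : ℕ → ℂ}
    (hφ : TendstoUniformlyOn (fun N => dirichletPartialSum a N) φ atTop {s | R < s.re})
    (hu : ∀ n : ℕ, Tendsto (fun j => ((n : ℂ) + 1) ^ (-(t j * I))) l (𝓝 (u n))) :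
    ∃ g, TendstoUniformlyOn (fun N => dirichletPartialSum (fun n => a n * u n) N) g atTop
        {s | R < s.re} ∧
      TendstoUniformlyOn (fun j s => φ (s + t j * I)) g l {s | R < s.re} := by
  refine exists_tendstoUniformlyOn_of_tendstoUniformlyOn_prod
    (F := fun N j s => dirichletPartialSum a N (s + t j * I)) ?_ fun N => ?_
  · exact (hφ.comp fun q : ι × ℂ => q.2 + t q.1 * I).mono fun q hq => by simpa using hq.2
  · simp only [dirichletPartialSum_add_mul_I]
    exact tendstoUniformlyOn_dirichletPartialSum (fun n => (hu n).const_mul (a n)) N R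

end DirichletPartialSum

lemma exists_subseq_tendsto_re_and_cpow_neg_im {s : ℕ → ℂ} {a b : ℝ}
    (hs : ∀ j, (s j).re ∈ Icc a b) :
    ∃ σ ∈ Icc a b, ∃ u : ℕ → ℂ, ∃ ρ : ℕ → ℕ, StrictMono ρ ∧
      Tendsto (fun j => (s (ρ j)).re) atTop (𝓝 σ) ∧
      ∀ n : ℕ, Tendsto (fun j => ((n : ℂ) + 1) ^ (-((s (ρ j)).im * I))) atTop (𝓝 (u n)) := by
  have hK : IsCompact (Icc a b ×ˢ univ.pi fun _ : ℕ => Metric.closedBall (0 : ℂ) 1) :=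
    isCompact_Icc.prod (isCompact_univ_pi fun _ => isCompact_closedBall _ _)
  obtain ⟨⟨σ, u⟩, hσu, ρ, hρ, hlim⟩ := hK.tendsto_subseq (x := fun j =>
    ((s j).re, fun n : ℕ => ((n : ℂ) + 1) ^ (-((s j).im * I)))) fun j =>
      ⟨hs j, fun n _ => by simp [norm_natCast_add_one_cpow]⟩
  exact ⟨σ, hσu.1, u, ρ, hρ, (continuous_fst.tendsto _).comp hlim,
    fun n => tendsto_pi_nhds.mp ((continuous_snd.tendsto _).comp hlim) n⟩

theorem re_coeff_zero_eq_zero_of_tendsto_re {c : ℕ → ℂ} {φ : ℂ → ℂ} {B κ R a b : ℝ}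
    (hφ : TendstoUniformlyOn (fun N => dirichletPartialSum c N) φ atTop {s | R < s.re})
    (hB : ∀ n, ‖c n‖ ≤ B * ((n : ℝ) + 1) ^ κ) (hre : ∀ s, R < s.re → 0 ≤ (φ s).re)
    {s : ℕ → ℂ} (hs : ∀ j, (s j).re ∈ Icc a b) (ha : R < a)
    (hlim : Tendsto (fun j => (φ (s j)).re) atTop (𝓝 0)) : (c 0).re = 0 := by
  obtain ⟨σ, hσ, u, ρ, hρ, hσ_lim, hu⟩ := exists_subseq_tendsto_re_and_cpow_neg_im hs
  obtain ⟨g, hPg, hφg⟩ := exists_tendstoUniformlyOn_vertical_translate hφ hu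
  set U : Set ℂ := {s | R < s.re}
  have hU : IsOpen U := isOpen_lt continuous_const continuous_re
  have hσU : (σ : ℂ) ∈ U := by simpa [U] using ha.trans_le hσ.1
  have hg_diff : DifferentiableOn ℂ g U := hPg.tendstoLocallyUniformlyOn.differentiableOn
    (Eventually.of_forall fun N => (differentiable_dirichletPartialSum _ N).differentiableOn) hU
  have hg_nonneg (z : ℂ) (hz : z ∈ U) : 0 ≤ (g z).re :=
    ge_of_tendsto ((continuous_re.tendsto _).comp (hφg.tendsto_at hz))
      (Eventually.of_forall fun j => hre _ (by simpa [U] using hz))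
  have hg_σ : (g σ).re = 0 := by
    have h := hφg.tendsto_comp (hg_diff.continuousOn σ hσU) (tendsto_nhdsWithin_iff.mpr
      ⟨(continuous_ofReal.tendsto σ).comp hσ_lim,
        Eventually.of_forall fun j => by simpa [U] using ha.trans_le (hs (ρ j)).1⟩)
    simp only [Function.comp_def, re_add_im] at h
    exact tendsto_nhds_unique ((continuous_re.tendsto _).comp h) (hlim.comp hρ.tendsto_atTop)
  have hg_re : EqOn (fun z => (g z).re) (fun _ => 0) U := by
    simpa [hg_σ] using eqOn_re_of_isPreconnected_of_isMinOn_re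
      (convex_halfSpace_re_gt R).isPreconnected hU hg_diff hσU
      fun z hz => by simpa [hg_σ] using hg_nonneg z hz
  have hu_norm (n : ℕ) : ‖u n‖ ≤ 1 :=
    le_of_tendsto' (hu n).norm fun j => by simp [norm_natCast_add_one_cpow]
  have hu_zero : u 0 = 1 := tendsto_nhds_unique (hu 0) (by simp)
  have hg_lim := tendsto_comap_re_atTop_coeff_zero (a := fun n => c n * u n)
    (fun n => by simpa using (mul_le_of_le_one_right (norm_nonneg _) (hu_norm n)).trans (hB n))
    fun z hz => hPg.tendsto_at hz
  have : (comap re atTop).NeBot := atTop_neBot.comap_of_surj re_surjective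
  refine tendsto_nhds_unique (by simpa [hu_zero] using (continuous_re.tendsto _).comp hg_lim)
    (tendsto_const_nhds.congr' ?_)
  exact ((eventually_gt_atTop R).comap re).mono fun z hz => (hg_re hz).symm

/-- Gordon–Hedenmalm, Proposition 4.2: a nonconstant Dirichlet series mapping `ℂ₊`
into `ℂ₊` maps each `ℂ_ε` into some `ℂ_θ` with `θ > 0`. -/
theorem nonconstant_dirichlet_maps_strictly
    (c : ℕ → ℂ) (φ : ℂ → ℂ)
    (hφ : ∀ ε > (0:ℝ), TendstoUniformlyOn
      (fun N s => ∑ n ∈ Finset.range N, c n * ((n:ℂ)+1) ^ (-s)) φ atTop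
      {s : ℂ | ε < s.re})
    (hnc : ∃ n : ℕ, 1 ≤ n ∧ c n ≠ 0)
    (hpos : ∀ s : ℂ, 0 < s.re → 0 < (φ s).re) :
    ∀ ε > (0:ℝ), ∃ θ > (0:ℝ), ∀ s : ℂ, ε < s.re → θ ≤ (φ s).re := by
  intro ε hε
  by_contra! hsmall
  have hconv (s : ℂ) (hs : 0 < s.re) :
      Tendsto (fun N => dirichletPartialSum c N s) atTop (𝓝 (φ s)) :=
    (hφ _ (half_pos hs)).tendsto_at (half_lt_self hs)
  obtain ⟨B, hB⟩ := exists_norm_le_mul_rpow_of_tendsto (hconv 1 (by simp))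
  have hc₀ : 0 < (c 0).re := zero_lt_re_coeff_zero hB hconv (fun s hs => (hpos s hs).le) hnc
  obtain ⟨σ, -, hσ⟩ := (atTop_basis.comap re).eventually_iff.mp
    (((continuous_re.tendsto _).comp (tendsto_comap_re_atTop_coeff_zero hB hconv)).eventually
      (lt_mem_nhds (half_lt_self hc₀)))
  choose s hs_re hs_small using fun j : ℕ => hsmall (min (1 / (j + 1)) ((c 0).re / 2))
    (by positivity)
  have hs_strip (j : ℕ) : (s j).re ∈ Icc ε σ :=
    ⟨(hs_re j).le, not_lt.mp fun h => (hσ h.le).not_ge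
      ((hs_small j).le.trans (min_le_right _ _))⟩
  have hs_lim : Tendsto (fun j => (φ (s j)).re) atTop (𝓝 0) :=
    tendsto_of_tendsto_of_tendsto_of_le_of_le tendsto_const_nhds
      tendsto_one_div_add_atTop_nhds_zero_nat (fun j => (hpos _ (hε.trans (hs_re j))).le)
      fun j => (hs_small j).le.trans (min_le_left _ _)
  exact hc₀.ne' (re_coeff_zero_eq_zero_of_tendsto_re (hφ _ (half_pos hε)) hB
    (fun s hs => (hpos s ((half_pos hε).trans hs)).le) hs_strip (half_lt_self hε) hs_lim)
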